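/- Let δ: ℝ → ℝ be convex and differentiable with nondecreasing derivative, let h₁, …, h_m ∈ ℝ, and consider minimizing Σᵢ δ(Rᵢ − hᵢ) over Rᵢ ≥ 0 with Σᵢ Rᵢ = R_sum > 0. Then an optimal solution is given by the water-filling allocation Rᵢ* = max(μ + hᵢ, 0), where μ is chosen so that Σᵢ Rᵢ* = R_sum. -/

import Mathlib

open Finset

/-!
Let `λ = δ' μ`. Each coordinate of the water-filling allocation `R*ᵢ = max (μ + hᵢ) 0` minimizes
`r ↦ δ (r - hᵢ) - λ r` over `r ≥ 0`: where `R*ᵢ > 0` the derivative vanishes, and where `R*ᵢ = 0`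
the derivative `δ' (-hᵢ) - λ` is nonnegative because `-hᵢ > μ` and `δ'` is monotone. Summing over
`i`, the multiplier terms cancel since both allocations have total `R_sum`.
-/

theorem ConvexOn.add_deriv_mul_sub_le {S : Set ℝ} {f : ℝ → ℝ} (hf : ConvexOn ℝ S f) {x y : ℝ}
    (hx : x ∈ S) (hy : y ∈ S) (hfx : DifferentiableAt ℝ f x) :
    f x + deriv f x * (y - x) ≤ f y := by
  rcases lt_trichotomy x y with hxy | rfl | hxy
  · have hslope := hf.deriv_le_slope hx hy hxy hfx
    rw [slope_def_field, le_div_iff₀ (sub_pos.2 hxy)] at hslope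
    linarith
  · simp
  · have hslope := hf.slope_le_deriv hy hx hxy hfx
    rw [slope_def_field, div_le_iff₀ (sub_pos.2 hxy)] at hslope
    linarith

theorem sum_le_sum_of_add_mul_sub_le {ι : Type*} [Fintype ι] (f : ι → ℝ → ℝ) (lam : ℝ)
    {x y : ι → ℝ} (hsum : ∑ i, x i = ∑ i, y i)
    (hx : ∀ i, f i (x i) + lam * (y i - x i) ≤ f i (y i)) :
    ∑ i, f i (x i) ≤ ∑ i, f i (y i) :=
  calc ∑ i, f i (x i) = ∑ i, (f i (x i) + lam * (y i - x i)) := by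
        rw [sum_add_distrib, ← mul_sum, sum_sub_distrib, hsum, sub_self, mul_zero, add_zero]
    _ ≤ ∑ i, f i (y i) := sum_le_sum fun i _ => hx i

theorem ConvexOn.waterfilling_add_deriv_mul_sub_le {δ : ℝ → ℝ} (hconv : ConvexOn ℝ Set.univ δ)
    (hdiff : Differentiable ℝ δ) (μ a : ℝ) {r : ℝ} (hr : 0 ≤ r) :
    δ (max (μ + a) 0 - a) + deriv δ μ * (r - max (μ + a) 0) ≤ δ (r - a) := by
  set s := max (μ + a) 0
  have htangent := hconv.add_deriv_mul_sub_le (Set.mem_univ (s - a)) (Set.mem_univ (r - a))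
    (hdiff (s - a))
  rw [sub_sub_sub_cancel_right] at htangent
  suffices deriv δ μ * (r - s) ≤ deriv δ (s - a) * (r - s) by linarith
  rcases le_or_gt 0 (μ + a) with hpos | hneg
  · rw [show s - a = μ by simp only [s, max_eq_left hpos]; ring]
  · have hs : s = 0 := max_eq_right hneg.le
    have hmono := hconv.monotoneOn_deriv fun x _ => hdiff x
    refine mul_le_mul_of_nonneg_right (hmono (Set.mem_univ _) (Set.mem_univ _) ?_) ?_ <;>
      linarith

theorem waterfilling_optimal_general (m : ℕ) (δ : ℝ → ℝ)
    (hconv : ConvexOn ℝ Set.univ δ) (hdiff : Differentiable ℝ δ)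
    (h : Fin m → ℝ) (Rsum : ℝ)
    (μ : ℝ) (hμ : ∑ i, max (μ + h i) 0 = Rsum) :
    ∀ R : Fin m → ℝ, (∀ i, 0 ≤ R i) → ∑ i, R i = Rsum →
      ∑ i, δ (max (μ + h i) 0 - h i) ≤ ∑ i, δ (R i - h i) := by
  intro R hR hRsum
  exact sum_le_sum_of_add_mul_sub_le (fun i r => δ (r - h i)) (deriv δ μ) (hμ.trans hRsum.symm)
    fun i => hconv.waterfilling_add_deriv_mul_sub_le hdiff μ (h i) (hR i)

theorem waterfilling_optimal (m : ℕ) (δ : ℝ → ℝ)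
    (hconv : ConvexOn ℝ Set.univ δ) (hdiff : Differentiable ℝ δ)
    (hmono : Monotone (deriv δ))
    (h : Fin m → ℝ) (Rsum : ℝ) (hRsum : 0 < Rsum)
    (μ : ℝ) (hμ : ∑ i, max (μ + h i) 0 = Rsum) :
    ∀ R : Fin m → ℝ, (∀ i, 0 ≤ R i) → ∑ i, R i = Rsum →
      ∑ i, δ (max (μ + h i) 0 - h i) ≤ ∑ i, δ (R i - h i) :=
  waterfilling_optimal_general m δ hconv hdiff h Rsum μ hμ
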